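/- Let p and k be natural numbers with p > 1, k ≥ 1, and p coprime to p+k. Then p and p+k are both prime if and only if p·(p+k) divides (p−1)!·(p+k) + (p+k−1)!·p + 2p + k, the expression being interpreted in the integers. -/
import Mathlib

lemma wilson_int (n : ℕ) (hn : 1 < n) :
    n.Prime ↔ (n : ℤ) ∣ ((n - 1).factorial : ℤ) + 1 := by
  rw [Nat.prime_iff_fac_equiv_neg_one (by omega)]
  constructor
  · intro h
    have : (((n - 1).factorial + 1 : ℕ) : ZMod n) = 0 := by
      push_cast [h]; ring
    rw [ZMod.natCast_eq_zero_iff] at this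
    exact_mod_cast Int.natCast_dvd_natCast.mpr this
  · intro h
    have h' : n ∣ (n - 1).factorial + 1 := by exact_mod_cast h
    have : (((n - 1).factorial + 1 : ℕ) : ZMod n) = 0 :=
      (ZMod.natCast_eq_zero_iff _ _).mpr h'
    push_cast at this
    linear_combination this

theorem primes_p_and_p_add_k (p k : ℕ) (hp : 1 < p) (hk : 1 ≤ k)
    (hcop : Nat.Coprime p (p + k)) :
    (p.Prime ∧ (p + k).Prime) ↔
      ((p : ℤ) * ((p : ℤ) + k)) ∣
        ((p - 1).factorial : ℤ) * ((p : ℤ) + k) + ((p + k - 1).factorial : ℤ) * (p : ℤ) +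
          2 * (p : ℤ) + k := by
  have hpk : 1 < p + k := by omega
  set E : ℤ := ((p - 1).factorial : ℤ) * ((p : ℤ) + k) + ((p + k - 1).factorial : ℤ) * (p : ℤ) +
      2 * (p : ℤ) + k with hE
  have hcopZ : IsCoprime (p : ℤ) ((p : ℤ) + k) := by
    have := Nat.isCoprime_iff_coprime.mpr hcop
    push_cast at this
    exact this
  have hcopk : IsCoprime (p : ℤ) (k : ℤ) := by
    have : Nat.Coprime p k := by simpa using hcop
    have := Nat.isCoprime_iff_coprime.mpr this
    exact this
  have key1 : (p : ℤ) ∣ E ↔ (p : ℤ) ∣ ((p - 1).factorial : ℤ) + 1 := by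
    have hEeq : E = (((p - 1).factorial : ℤ) + 1) * k +
        (p : ℤ) * (((p - 1).factorial : ℤ) + ((p + k - 1).factorial : ℤ) + 2) := by
      rw [hE]; ring
    rw [hEeq]
    constructor
    · intro h
      have h2 : (p : ℤ) ∣ (((p - 1).factorial : ℤ) + 1) * k := by
        have := h.sub (dvd_mul_right (p : ℤ)
          (((p - 1).factorial : ℤ) + ((p + k - 1).factorial : ℤ) + 2))
        simpa using this
      exact hcopk.dvd_of_dvd_mul_right h2
    · intro h
      exact dvd_add (h.mul_right _) (Dvd.intro _ rfl)
  have key2 : ((p : ℤ) + k) ∣ E ↔ ((p : ℤ) + k) ∣ ((p + k - 1).factorial : ℤ) + 1 := by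
    have hEeq : E = (((p + k - 1).factorial : ℤ) + 1) * p +
        ((p : ℤ) + k) * (((p - 1).factorial : ℤ) + 1) := by
      rw [hE]; ring
    rw [hEeq]
    constructor
    · intro h
      have h2 : ((p : ℤ) + k) ∣ (((p + k - 1).factorial : ℤ) + 1) * p := by
        have := h.sub (dvd_mul_right ((p : ℤ) + k) (((p - 1).factorial : ℤ) + 1))
        simpa using this
      exact hcopZ.symm.dvd_of_dvd_mul_right h2
    · intro h
      exact dvd_add (h.mul_right _) (Dvd.intro _ rfl)
  rw [wilson_int p hp, wilson_int (p + k) hpk]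
  have hcast : ((p + k : ℕ) : ℤ) = (p : ℤ) + k := by push_cast; ring
  rw [hcast]
  constructor
  · rintro ⟨h1, h2⟩
    exact hcopZ.mul_dvd (key1.mpr h1) (key2.mpr h2)
  · intro h
    exact ⟨key1.mp (dvd_of_mul_right_dvd h), key2.mp (dvd_of_mul_left_dvd h)⟩
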